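/- Let G₁ be a proper topological groupoid over G₀ with (s,t) : G₁ → G₀ × G₀ proper, acting on a topological space Z via moment map ρ : Z → G₀, and suppose a groupoid H acts on Z freely and properly on the right with ρ inducing Z/H ≅ G₀, where H is étale (source and target are local homeomorphisms). Then the quotient map ρ : Z → Z/H ≅ G₀ is étale (a local homeomorphism): for every z ∈ Z there exist open neighborhoods W of z and U of ρ(z) such that ρ restricts to a homeomorphism W → U. -/
import Mathlib


/-- let a proper topological groupoid `G` act on `Z` via the moment
map `ρ`, and let an étale groupoid `H` act on `Z` on the right, freely and
properly, with `ρ` inducing `Z/H ≅ G₀`. Then `ρ : Z → G₀` is a local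
homeomorphism. -/
theorem quotient_map_etale
    {Z GO GA HO HA : Type}
    [TopologicalSpace Z] [TopologicalSpace GO] [TopologicalSpace GA]
    [TopologicalSpace HO] [TopologicalSpace HA]
    (sG tG : GA → GO) (ρ : Z → GO) (lact : GA → Z → Z)
    (hGproper : IsProperMap (fun a : GA => (sG a, tG a)))
    (hlactcont : Continuous (fun p : {q : GA × Z // sG q.1 = ρ q.2} =>
        lact p.val.1 p.val.2))
    (sH tH : HA → HO)
    (hsH : IsLocalHomeomorph sH) (htH : IsLocalHomeomorph tH)
    (σ : Z → HO) (hσ : Continuous σ)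
    (ract : Z → HA → Z)
    (hractcont : Continuous (fun p : {q : Z × HA // tH q.2 = σ q.1} =>
        ract p.val.1 p.val.2))
    (hfree : ∀ z h₁ h₂, tH h₁ = σ z → tH h₂ = σ z → ract z h₁ = ract z h₂ → h₁ = h₂)
    (hproper : IsProperMap (fun p : {q : Z × HA // tH q.2 = σ q.1} =>
        (ract p.val.1 p.val.2, p.val.1)))
    (hρcont : Continuous ρ)
    (hρquot : Topology.IsQuotientMap ρ)
    (hfib : ∀ z z', ρ z = ρ z' ↔ ∃ h, tH h = σ z ∧ ract z h = z') :
    IsLocalHomeomorph ρ := by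
  classical
  -- notation for the fibered product and the structure maps
  set E := {q : Z × HA // tH q.2 = σ q.1} with hE
  set α : E → Z := fun e => ract e.val.1 e.val.2 with hα
  set ι : E → Z × Z := fun e => (α e, e.val.1) with hι
  have hαcont : Continuous α := hractcont
  have hp₁cont : Continuous (fun e : E => e.val.1) :=
    continuous_fst.comp continuous_subtype_val
  have hp₂cont : Continuous (fun e : E => e.val.2) :=
    continuous_snd.comp continuous_subtype_val
  -- ι is injective, by freeness
  have hι_inj : Function.Injective ι := by
    rintro ⟨⟨z₁, h₁⟩, hc₁⟩ ⟨⟨z₂, h₂⟩, hc₂⟩ heq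
    simp only [hι, Prod.mk.injEq] at heq
    obtain ⟨heq1, heq2⟩ := heq
    subst heq2
    have : h₁ = h₂ := hfree z₁ h₁ h₂ hc₁ hc₂ heq1
    subst this
    rfl
  -- ι is a closed embedding
  have hι_emb : Topology.IsClosedEmbedding ι :=
    Topology.IsClosedEmbedding.of_continuous_injective_isClosedMap
      hproper.continuous hι_inj hproper.isClosedMap
  -- the unit section, via choice
  have exu : ∀ z : Z, ∃ h, tH h = σ z ∧ ract z h = z := fun z => (hfib z z).mp rfl
  set U : Z → E := fun z => ⟨(z, (exu z).choose), (exu z).choose_spec.1⟩ with hU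
  have hUact : ∀ z, ract z ((U z).val.2) = z := fun z => (exu z).choose_spec.2
  have hUcont : Continuous U := by
    rw [hι_emb.isEmbedding.continuous_iff]
    have : ι ∘ U = fun z => (z, z) := by
      funext z
      simp only [Function.comp_apply, hι, hα, hU]
      exact Prod.ext (hUact z) rfl
    rw [this]
    exact continuous_id.prodMk continuous_id
  set η : Z → HA := fun z => (U z).val.2 with hη
  have hηcont : Continuous η := hp₂cont.comp hUcont
  have hηt : ∀ z, tH (η z) = σ z := fun z => (U z).prop
  have hηact : ∀ z, ract z (η z) = z := hUact
  -- the first projection E → Z is an open map, since tH is a local homeomorphism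
  have hp₁open : IsOpenMap (fun e : E => e.val.1) := by
    intro O hO
    obtain ⟨V, hV, rfl⟩ := isOpen_induced_iff.mp hO
    rw [isOpen_iff_forall_mem_open]
    rintro w ⟨⟨⟨w', h⟩, hc⟩, hmemV, rfl⟩
    obtain ⟨u, v, hu, hv, hwu, hhv, huv⟩ := isOpen_prod_iff.mp hV w' h hmemV
    obtain ⟨φ, hhφ, hφeq⟩ := htH h
    refine ⟨u ∩ σ ⁻¹' (φ '' (φ.source ∩ v)), ?_, ?_, ?_⟩
    · rintro x ⟨hxu, hxσ⟩
      obtain ⟨h', ⟨hh's, hh'v⟩, hφh'⟩ := hxσ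
      have htH' : tH h' = σ x := by rw [hφeq]; exact hφh'
      exact ⟨⟨(x, h'), htH'⟩, huv ⟨hxu, hh'v⟩, rfl⟩
    · exact (hu.inter ((φ.isOpen_image_of_subset_source
        (φ.open_source.inter hv) Set.inter_subset_left).preimage hσ))
    · refine ⟨hwu, ⟨h, ⟨hhφ, hhv⟩, ?_⟩⟩
      rw [← hφeq]; exact hc
  -- ρ is an open map
  have hρopen : IsOpenMap ρ := by
    intro O hO
    rw [← hρquot.isOpen_preimage]
    have : ρ ⁻¹' (ρ '' O) = (fun e : E => e.val.1) '' (α ⁻¹' O) := by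
      ext w
      constructor
      · rintro ⟨z', hz'O, hz'w⟩
        obtain ⟨h, hth, hracth⟩ := (hfib w z').mp hz'w.symm
        exact ⟨⟨(w, h), hth⟩, by simpa [hα] using hracth ▸ hz'O, rfl⟩
      · rintro ⟨⟨⟨w', h⟩, hc⟩, hmem, rfl⟩
        refine ⟨ract w' h, hmem, ?_⟩
        exact ((hfib w' (ract w' h)).mpr ⟨h, hc, rfl⟩).symm
    rw [this]
    exact hp₁open _ (hO.preimage hαcont)
  -- now prove ρ is a local homeomorphism
  rw [isLocalHomeomorph_iff_isOpenEmbedding_restrict]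
  intro z
  -- chart of tH around the unit at z
  obtain ⟨φ, hzφ, hφeq⟩ := htH (η z)
  set N := φ.source with hN
  have hNopen : IsOpen N := φ.open_source
  have hNinj : Set.InjOn tH N := by rw [hφeq]; exact φ.injOn
  -- the closed set of arrows outside N, and its image under ι
  have hFclosed : IsClosed {e : E | e.val.2 ∉ N} := by
    have : {e : E | e.val.2 ∉ N} = (fun e : E => e.val.2) ⁻¹' Nᶜ := rfl
    rw [this]
    exact hNopen.isClosed_compl.preimage hp₂cont
  have hιFclosed : IsClosed (ι '' {e : E | e.val.2 ∉ N}) :=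
    hproper.isClosedMap _ hFclosed
  have hzz_notin : (z, z) ∉ ι '' {e : E | e.val.2 ∉ N} := by
    rintro ⟨⟨⟨w, h⟩, hc⟩, hhN, heq⟩
    simp only [hι, hα, Prod.mk.injEq] at heq
    obtain ⟨heq1, heq2⟩ := heq
    subst heq2
    have : h = η w := hfree w h (η w) hc (hηt w) (by rw [heq1, hηact w])
    exact hhN (this ▸ hzφ)
  obtain ⟨W₁, W₂, hW₁, hW₂, hzW₁, hzW₂, hsub⟩ :=
    isOpen_prod_iff.mp hιFclosed.isOpen_compl z z hzz_notin
  -- the neighborhood on which ρ is injective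
  set W : Set Z := W₁ ∩ W₂ ∩ η ⁻¹' N with hW
  have hWopen : IsOpen W := (hW₁.inter hW₂).inter (hNopen.preimage hηcont)
  have hzW : z ∈ W := ⟨⟨hzW₁, hzW₂⟩, hzφ⟩
  have hinj : Set.InjOn ρ W := by
    rintro w ⟨⟨hw1, hw2⟩, hwN⟩ w' ⟨⟨hw'1, hw'2⟩, _⟩ hρeq
    obtain ⟨h, hth, hracth⟩ := (hfib w w').mp hρeq
    have hhN : h ∈ N := by
      by_contra hhn
      have : ι ⟨(w, h), hth⟩ ∈ ι '' {e : E | e.val.2 ∉ N} :=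
        Set.mem_image_of_mem _ hhn
      have hmem : ι ⟨(w, h), hth⟩ ∈ W₁ ×ˢ W₂ := by
        simp only [hι, hα, hracth]
        exact ⟨hw'1, hw2⟩
      exact hsub hmem this
    have : h = η w := hNinj hhN hwN (by rw [hth, hηt w])
    rw [← hracth, this, hηact w]
  refine ⟨W, hWopen.mem_nhds hzW, ?_⟩
  exact Topology.IsOpenEmbedding.of_continuous_injective_isOpenMap
    (hρcont.comp continuous_subtype_val) hinj.injective (hρopen.restrict hWopen)
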